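/- arXiv:0704.1859 — 3 statements merged into one kernel-verified Lean document; each statement's English description precedes it below -/
import Mathlib

section
/- There exists a constant C > 0 (depending only on q; one may take C = 4) such that for every n ∈ ℕ and all finite subsets E, F′ ⊆ F, ⟨χ_n ∗ χ_E, χ_{F′}⟩ ≤ C · q^{n/2} · |E|^{1/2} · |F′|^{1/2}. (Equivalently, the convolution operator λ(χ_n) with the indicator of the sphere of radius n is of restricted weak type (2,2) with ‖λ(χ_n)‖_{(2,1)→(2,∞)} ≤ c q^{n/2}.) -/
open scoped ENNReal

noncomputable section

/-- Word length on the free group: the number of letters of the reduced word. -/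
def wlen {α : Type*} [DecidableEq α] (x : FreeGroup α) : ℕ := x.toWord.length

/-- Convolution of `ℝ≥0∞`-valued functions on a group:
`(f ∗ g)(x) = Σ_y f(y) g(y⁻¹ x)`. -/
def conv {G : Type*} [Group G] (f g : G → ℝ≥0∞) (x : G) : ℝ≥0∞ :=
  ∑' y, f y * g (y⁻¹ * x)

/-- Indicator (ℝ≥0∞-valued) of the sphere of radius `n` in the free group. -/
def sphInd {α : Type*} [DecidableEq α] (n : ℕ) (x : FreeGroup α) : ℝ≥0∞ :=
  if wlen x = n then 1 else 0

/-- Indicator function (ℝ≥0∞-valued) of a finite set. -/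
def finInd {G : Type*} [DecidableEq G] (E : Finset G) (x : G) : ℝ≥0∞ :=
  if x ∈ E then 1 else 0

/-!
Reducing `v u⁻¹` cancels a common tail of the reduced words of `u` and `v`, so if
`|v u⁻¹| = n` then for some `i ≤ n` the words of `u` and `v` agree once their first `i`,
resp. `n - i`, letters are deleted. Given `v` and `i`, the first `i` letters of `u` form one of
the at most `2 q ^ i` reduced words of length `i`, and symmetrically given `u`; so the pairs in
`E × F'` with split `i` number at most `min (2 |F'| q ^ i) (2 |E| q ^ (n - i))`. As `i` varies
these are two geometric sequences crossing at their geometric mean `2 (|E| |F'| q ^ n) ^ (1/2)`,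
and the sum of each sequence up to the crossing is at most `q / (q - 1)` times its last term.
-/

open Finset FreeGroup

section ListCount

variable {β : Type*} [Fintype β] [DecidableEq β]

theorem card_filter_tail_eq_le {T : Finset (List β)} (hT : [] ∉ T)
    (L : List β) : #{M ∈ T | M.tail = L} ≤ #{a | a :: L ∈ T} := by
  calc #{M ∈ T | M.tail = L} ≤ #(({a | a :: L ∈ T} : Finset _).image (· :: L)) := by
        refine card_le_card fun M hM ↦ ?_
        obtain ⟨hMT, rfl⟩ := mem_filter.mp hM
        obtain ⟨a, M, rfl⟩ := List.exists_cons_of_ne_nil (ne_of_mem_of_not_mem hMT hT)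
        exact mem_image_of_mem _ (mem_filter.mpr ⟨mem_univ _, hMT⟩)
    _ ≤ _ := card_image_le

end ListCount

namespace FreeGroup

variable {α : Type*} [DecidableEq α]

theorem IsReduced.invRev {L : List (α × Bool)} (h : IsReduced L) : IsReduced (invRev L) :=
  .of_reduce_eq (by rw [reduce_invRev, h.reduce_eq])

theorem exists_reduce_append_invRev_eq {U V : List (α × Bool)} (hU : IsReduced U)
    (hV : IsReduced V) :
    ∃ P S W, U = P ++ W ∧ V = S ++ W ∧ reduce (V ++ invRev U) = S ++ invRev P := by
  induction U using List.reverseRecOn generalizing V with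
  | nil => exact ⟨[], V, [], rfl, by simp, by simp [invRev, hV.reduce_eq]⟩
  | append_singleton U x ih =>
    rcases V.eq_nil_or_concat' with rfl | ⟨V, y, rfl⟩
    · exact ⟨U ++ [x], [], [], by simp, rfl, hU.invRev.reduce_eq⟩
    by_cases hxy : y = x
    · subst hxy
      obtain ⟨P, S, W, rfl, rfl, hPS⟩ :=
        ih (hU.infix (List.prefix_append _ _).isInfix) (hV.infix (List.prefix_append _ _).isInfix)
      refine ⟨P, S, W ++ [y], by simp, by simp, ?_⟩
      rw [← hPS]
      apply reduce.Step.eq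
      simpa [invRev_append, invRev] using
        (Red.Step.not (L₁ := S ++ W) (L₂ := invRev W ++ invRev P) (x := y.1) (b := y.2))
    · refine ⟨U ++ [x], V ++ [y], [], by simp, by simp, IsReduced.reduce_eq ?_⟩
      have hyx : IsReduced [y, (x.1, !x.2)] := by
        rw [isReduced_cons_cons]
        refine ⟨fun h ↦ ?_, .singleton⟩
        obtain ⟨a, s⟩ := x; obtain ⟨b, t⟩ := y
        dsimp only at h ⊢; subst h
        cases s <;> cases t <;> simp_all
      have hx : IsReduced ((x.1, !x.2) :: invRev U) := by
        simpa [invRev_append, invRev] using hU.invRev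
      have hVyx : IsReduced (V ++ [y, (x.1, !x.2)]) := by
        simpa using hV.append_overlap hyx (by simp)
      have hyxU : IsReduced ([y, (x.1, !x.2)] ++ invRev U) :=
        IsReduced.append_overlap (L₁ := [y]) (L₂ := [_]) hyx hx (by simp)
      simpa [invRev_append, invRev] using hVyx.append_overlap hyxU (by simp)

section Fintype

variable [Fintype α]

theorem card_le_of_forall_isReduced_cons {L : List (α × Bool)} (hL : L ≠ [])
    {s : Finset (α × Bool)} (hs : ∀ a ∈ s, IsReduced (a :: L)) :
    #s ≤ 2 * Fintype.card α - 1 := by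
  obtain ⟨b, L, rfl⟩ := List.exists_cons_of_ne_nil hL
  have hsub : s ⊆ univ.erase (b.1, !b.2) := fun a ha ↦ by
    have := (isReduced_cons_cons.mp (hs a ha)).1
    simp only [mem_erase, mem_univ, and_true]
    rintro rfl
    simp at this
  calc #s ≤ #(univ.erase (b.1, !b.2)) := card_le_card hsub
    _ = 2 * Fintype.card α - 1 := by simp [card_erase_of_mem, mul_comm]

theorem card_le_of_isReduced_of_length_eq_succ (i : ℕ) {T : Finset (List (α × Bool))}
    (hT : ∀ L ∈ T, IsReduced L ∧ L.length = i + 1) :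
    #T ≤ 2 * Fintype.card α * (2 * Fintype.card α - 1) ^ i := by
  have hnil : [] ∉ T := fun h ↦ by simpa using (hT [] h).2
  induction i generalizing T with
  | zero =>
    calc #T ≤ 2 * Fintype.card α * #(T.image List.tail) :=
          card_le_mul_card_image T _ fun L _ ↦ (card_filter_tail_eq_le hnil L).trans
            (card_le_univ _ |>.trans (by simp [mul_comm]))
      _ ≤ 2 * Fintype.card α * 1 := by
          gcongr
          refine card_le_one.mpr ?_
          simp only [mem_image]
          rintro _ ⟨L, hL, rfl⟩ _ ⟨M, hM, rfl⟩
          rw [List.eq_nil_of_length_eq_zero (l := L.tail) (by simp [(hT L hL).2]),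
            List.eq_nil_of_length_eq_zero (l := M.tail) (by simp [(hT M hM).2])]
      _ = _ := by simp
  | succ i ih =>
    have htail : ∀ L ∈ T.image List.tail, IsReduced L ∧ L.length = i + 1 := by
      simp only [mem_image]
      rintro _ ⟨L, hL, rfl⟩
      exact ⟨(hT L hL).1.infix (List.tail_suffix L).isInfix, by simp [(hT L hL).2]⟩
    have hfiber : ∀ L ∈ T.image List.tail, #{a | a :: L ∈ T} ≤ 2 * Fintype.card α - 1 :=
      fun L hL ↦ card_le_of_forall_isReduced_cons
        (List.ne_nil_of_length_pos (by simp [(htail L hL).2]))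
        fun a ha ↦ (hT _ (mem_filter.mp ha).2).1
    calc #T ≤ (2 * Fintype.card α - 1) * #(T.image List.tail) :=
          card_le_mul_card_image T _ fun L hL ↦ (card_filter_tail_eq_le hnil L).trans (hfiber L hL)
      _ ≤ (2 * Fintype.card α - 1) * (2 * Fintype.card α * (2 * Fintype.card α - 1) ^ i) := by
          gcongr
          exact ih htail (fun h ↦ by simpa using (htail [] h).2)
      _ = _ := by ring

end Fintype

end FreeGroup

section SphereCount

variable {α : Type*} [DecidableEq α]

def SharesTail (i j : ℕ) (u v : FreeGroup α) : Prop :=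
  i ≤ wlen u ∧ j ≤ wlen v ∧ u.toWord.drop i = v.toWord.drop j

instance (i j : ℕ) (u v : FreeGroup α) : Decidable (SharesTail i j u v) :=
  inferInstanceAs (Decidable (_ ∧ _ ∧ _))

theorem exists_sharesTail (u v : FreeGroup α) :
    ∃ i ≤ wlen (v * u⁻¹), SharesTail i (wlen (v * u⁻¹) - i) u v := by
  obtain ⟨P, S, W, hu, hv, hvu⟩ :=
    exists_reduce_append_invRev_eq (isReduced_toWord (x := u)) (isReduced_toWord (x := v))
  have hlen : wlen (v * u⁻¹) = S.length + P.length := by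
    simp [wlen, toWord_mul, toWord_inv, hvu]
  refine ⟨P.length, by omega, ?_, ?_, ?_⟩
  · simp [wlen, hu]
  · rw [hlen]; simp [wlen, hv]
  · simp [hu, hv, hlen]

theorem sharesTail_comm {i j : ℕ} {u v : FreeGroup α} :
    SharesTail i j u v ↔ SharesTail j i v u := by
  unfold SharesTail; tauto

variable [Fintype α] [Nonempty α]

theorem card_filter_sharesTail_le (i j : ℕ) (E : Finset (FreeGroup α))
    (v : FreeGroup α) : #{u ∈ E | SharesTail i j u v} ≤ 2 * (2 * Fintype.card α - 1) ^ i := by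
  set s := {u ∈ E | SharesTail i j u v}
  have hinj : Set.InjOn (fun u : FreeGroup α ↦ u.toWord.take i) s := fun u hu w hw h ↦ by
    simp only [s, mem_coe, mem_filter] at h hu hw
    rw [← toWord_inj, ← List.take_append_drop i u.toWord, ← List.take_append_drop i w.toWord,
      h, hu.2.2.2, hw.2.2.2]
  rw [← card_image_of_injOn hinj]
  cases i with
  | zero =>
    refine (card_le_one.mpr ?_).trans (by norm_num)
    simp only [mem_image, List.take_zero]
    rintro _ ⟨_, _, rfl⟩ _ ⟨_, _, rfl⟩
    rfl
  | succ i =>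
    have hα : 1 ≤ Fintype.card α := Fintype.card_pos
    refine (card_le_of_isReduced_of_length_eq_succ i ?_).trans ?_
    · simp only [mem_image]
      rintro _ ⟨u, hu, rfl⟩
      exact ⟨isReduced_toWord.infix (List.take_prefix _ _).isInfix,
        List.length_take_of_le (mem_filter.mp hu).2.1⟩
    · rw [pow_succ', ← mul_assoc]
      gcongr
      omega

theorem sum_card_filter_wlen_mul_inv_eq_le (n : ℕ) (E F : Finset (FreeGroup α)) :
    ∑ v ∈ F, #{u ∈ E | wlen (v * u⁻¹) = n} ≤
      ∑ i ∈ range (n + 1), min (2 * #F * (2 * Fintype.card α - 1) ^ i)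
        (2 * #E * (2 * Fintype.card α - 1) ^ (n - i)) :=
  calc ∑ v ∈ F, #{u ∈ E | wlen (v * u⁻¹) = n}
      ≤ ∑ v ∈ F, ∑ i ∈ range (n + 1), #{u ∈ E | SharesTail i (n - i) u v} := by
        refine sum_le_sum fun v _ ↦ (card_le_card fun u hu ↦ ?_).trans card_biUnion_le
        obtain ⟨huE, rfl⟩ := mem_filter.mp hu
        obtain ⟨i, hi, hshare⟩ := exists_sharesTail u v
        exact mem_biUnion.mpr
          ⟨i, mem_range.mpr (Nat.lt_succ_of_le hi), mem_filter.mpr ⟨huE, hshare⟩⟩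
    _ = ∑ i ∈ range (n + 1), ∑ v ∈ F, #{u ∈ E | SharesTail i (n - i) u v} := sum_comm
    _ ≤ _ := by
        refine sum_le_sum fun i _ ↦ le_min ?_ ?_
        · refine (sum_le_card_nsmul _ _ _ fun v _ ↦ card_filter_sharesTail_le _ _ E v).trans_eq ?_
          rw [smul_eq_mul]; ring
        · refine (sum_card_bipartiteAbove_eq_sum_card_bipartiteBelow
            (r := fun v u ↦ SharesTail i (n - i) u v)).trans_le ?_
          have hcol : ∀ u ∈ E, #(F.bipartiteBelow (fun v u ↦ SharesTail i (n - i) u v) u) ≤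
              2 * (2 * Fintype.card α - 1) ^ (n - i) := fun u _ ↦ by
            simpa only [bipartiteBelow, sharesTail_comm (i := i)] using
              card_filter_sharesTail_le _ _ F u
          exact (sum_le_card_nsmul _ _ _ hcol).trans_eq (by rw [smul_eq_mul]; ring)

end SphereCount

section Convolution

variable {G : Type*} [DecidableEq G]

theorem tsum_mul_finInd (g : G → ℝ≥0∞) (F : Finset G) :
    ∑' x, g x * finInd F x = ∑ x ∈ F, g x := by
  rw [tsum_eq_sum (s := F) fun x hx ↦ by simp [finInd, hx]]
  exact sum_congr rfl fun x hx ↦ by simp [finInd, hx]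

theorem conv_finInd [Group G] (f : G → ℝ≥0∞) (E : Finset G) (x : G) :
    conv f (finInd E) x = ∑ u ∈ E, f (x * u⁻¹) := by
  rw [conv, ← tsum_mul_finInd, ← ((Equiv.inv G).trans (Equiv.mulLeft x)).tsum_eq]
  simp

theorem tsum_conv_finInd_mul_finInd [Group G] (f : G → ℝ≥0∞) (E F : Finset G) :
    ∑' x, conv f (finInd E) x * finInd F x = ∑ v ∈ F, ∑ u ∈ E, f (v * u⁻¹) := by
  simp only [tsum_mul_finInd, conv_finInd]

end Convolution

theorem tsum_conv_sphInd_mul_finInd {α : Type*} [DecidableEq α] (n : ℕ)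
    (E F : Finset (FreeGroup α)) :
    ∑' x, conv (sphInd n) (finInd E) x * finInd F x =
      ∑ v ∈ F, #{u ∈ E | wlen (v * u⁻¹) = n} := by
  simp [tsum_conv_finInd_mul_finInd, sphInd]

theorem min_le_ite_add_ite {x y M : ℝ} (hy : 0 ≤ y) (hM : 0 ≤ M) (hxy : x * y ≤ M ^ 2) :
    min x y ≤ (if x ≤ M then x else 0) + (if y ≤ M then y else 0) := by
  by_cases hxM : x ≤ M
  · simp only [hxM, if_true]
    split_ifs <;> linarith [min_le_left x y]
  · have hyM : y ≤ M := by
      by_contra! hMy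
      nlinarith [mul_lt_mul'' (not_le.mp hxM) hMy hM hM]
    simp only [hxM, hyM, if_true, if_false, zero_add]
    exact min_le_right x y

theorem sum_filter_geom_le {q c M : ℝ} (hq : 1 < q) (hc : 0 ≤ c) (hM : 0 ≤ M) (s : Finset ℕ) :
    ∑ i ∈ s with c * q ^ i ≤ M, c * q ^ i ≤ q / (q - 1) * M := by
  rcases (s.filter (c * q ^ · ≤ M)).eq_empty_or_nonempty with hempty | hne
  · rw [hempty, sum_empty]
    have : 0 ≤ q / (q - 1) := div_nonneg (by linarith) (by linarith)
    positivity
  set m := (s.filter (c * q ^ · ≤ M)).max' hne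
  have hgeom : ∑ i ∈ range (m + 1), q ^ i ≤ q ^ (m + 1) / (q - 1) := by
    rw [le_div_iff₀ (by linarith), geom_sum_mul]
    linarith
  calc ∑ i ∈ s with c * q ^ i ≤ M, c * q ^ i ≤ ∑ i ∈ range (m + 1), c * q ^ i :=
        sum_le_sum_of_subset_of_nonneg
          (fun i hi ↦ mem_range.mpr (Nat.lt_succ_of_le (le_max' _ i hi)))
          (fun i _ _ ↦ by positivity)
    _ = c * ∑ i ∈ range (m + 1), q ^ i := (mul_sum _ _ _).symm
    _ ≤ c * (q ^ (m + 1) / (q - 1)) := by gcongr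
    _ = q / (q - 1) * (c * q ^ m) := by ring
    _ ≤ q / (q - 1) * M := by
        have : 0 ≤ q / (q - 1) := div_nonneg (by linarith) (by linarith)
        gcongr
        exact (mem_filter.mp (max'_mem _ hne)).2

theorem sum_min_geom_le {q a b : ℝ} (hq : 1 < q) (ha : 0 ≤ a) (hb : 0 ≤ b) (n : ℕ) :
    ∑ i ∈ range (n + 1), min (b * q ^ i) (a * q ^ (n - i)) ≤
      2 * (q / (q - 1)) * √(a * b * q ^ n) := by
  set M := √(a * b * q ^ n)
  have hM : 0 ≤ M := Real.sqrt_nonneg _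
  have hprod : ∀ i ∈ range (n + 1), b * q ^ i * (a * q ^ (n - i)) ≤ M ^ 2 := fun i hi ↦ by
    rw [Real.sq_sqrt (by positivity), ← Nat.add_sub_cancel' (mem_range_succ_iff.mp hi), pow_add,
      Nat.add_sub_cancel_left]
    linarith
  have hleft := sum_filter_geom_le hq hb hM (range (n + 1))
  have hright := sum_filter_geom_le hq ha hM (range (n + 1))
  rw [sum_filter] at hleft hright
  rw [← sum_range_reflect] at hright
  simp only [add_tsub_cancel_right] at hright
  calc ∑ i ∈ range (n + 1), min (b * q ^ i) (a * q ^ (n - i))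
      ≤ ∑ i ∈ range (n + 1), ((if b * q ^ i ≤ M then b * q ^ i else 0) +
          (if a * q ^ (n - i) ≤ M then a * q ^ (n - i) else 0)) :=
        sum_le_sum fun i hi ↦ min_le_ite_add_ite (by positivity) hM (hprod i hi)
    _ ≤ _ := by
        rw [sum_add_distrib]
        linarith

theorem ofReal_sqrt_natCast_mul_mul_pow (a b q n : ℕ) :
    ENNReal.ofReal √((a : ℝ) * b * (q : ℝ) ^ n) =
      (q : ℝ≥0∞) ^ ((n : ℝ) / 2) * (a : ℝ≥0∞) ^ ((1 : ℝ) / 2) * (b : ℝ≥0∞) ^ ((1 : ℝ) / 2) := by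
  have half : (0 : ℝ) ≤ 1 / 2 := by norm_num
  rw [← ENNReal.ofReal_natCast q, ← ENNReal.ofReal_natCast a, ← ENNReal.ofReal_natCast b,
    ENNReal.ofReal_rpow_of_nonneg (Nat.cast_nonneg _) (by positivity),
    ENNReal.ofReal_rpow_of_nonneg (Nat.cast_nonneg _) half,
    ENNReal.ofReal_rpow_of_nonneg (Nat.cast_nonneg _) half,
    ← ENNReal.ofReal_mul (by positivity), ← ENNReal.ofReal_mul (by positivity),
    Real.sqrt_eq_rpow, Real.mul_rpow (by positivity) (by positivity),
    Real.mul_rpow (by positivity) (by positivity), ← Real.rpow_natCast,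
    ← Real.rpow_mul (by positivity)]
  ring_nf

/-- There is a constant `C > 0` such that for every `n` and all finite subsets
`E, F'` of the free group, `⟨χ_n ∗ χ_E, χ_{F'}⟩ ≤ C q^{n/2} |E|^{1/2} |F'|^{1/2}`,
i.e. `λ(χ_n)` is of restricted weak type `(2,2)` with norm at most `C q^{n/2}`. -/
theorem sphere_restricted_weak_type_two_two
    (r : ℕ) (hr : 2 ≤ r) (q : ℕ) (hq : q = 2 * r - 1) :
    ∃ C : ℝ, 0 < C ∧
      ∀ (n : ℕ) (E F' : Finset (FreeGroup (Fin r))),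
        ∑' x : FreeGroup (Fin r), conv (sphInd n) (finInd E) x * finInd F' x
          ≤ ENNReal.ofReal C * (q : ℝ≥0∞) ^ ((n : ℝ) / 2) *
            (E.card : ℝ≥0∞) ^ ((1 : ℝ) / 2) * (F'.card : ℝ≥0∞) ^ ((1 : ℝ) / 2) := by
  have : Nonempty (Fin r) := ⟨⟨0, by omega⟩⟩
  have hq1 : (1 : ℝ) < q := by exact_mod_cast (by omega : 1 < q)
  have hC : 0 < q / ((q : ℝ) - 1) := div_pos (by linarith) (by linarith)
  refine ⟨4 * (q / (q - 1)), by positivity, fun n E F' ↦ ?_⟩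
  set N := ∑ v ∈ F', #{u ∈ E | wlen (v * u⁻¹) = n}
  have hcount :
      (N : ℝ) ≤ ∑ i ∈ range (n + 1), min (2 * #F' * (q : ℝ) ^ i) (2 * #E * q ^ (n - i)) := by
    have := sum_card_filter_wlen_mul_inv_eq_le n E F'
    rw [Fintype.card_fin, ← hq] at this
    exact_mod_cast this
  have hreal : (N : ℝ) ≤ 4 * (q / (q - 1)) * √((#E : ℝ) * #F' * (q : ℝ) ^ n) := by
    refine hcount.trans ((sum_min_geom_le hq1 (by positivity) (by positivity) n).trans_eq ?_)
    rw [show (2 * #E * (2 * #F') * (q : ℝ) ^ n) = 2 ^ 2 * (#E * #F' * q ^ n) by ring,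
      Real.sqrt_mul (by norm_num), Real.sqrt_sq (by norm_num)]
    ring
  calc ∑' x, conv (sphInd n) (finInd E) x * finInd F' x = ENNReal.ofReal N := by
        rw [tsum_conv_sphInd_mul_finInd, ENNReal.ofReal_natCast, Nat.cast_sum]
    _ ≤ ENNReal.ofReal (4 * (q / (q - 1)) * √((#E : ℝ) * #F' * (q : ℝ) ^ n)) :=
        ENNReal.ofReal_le_ofReal hreal
    _ = _ := by
        rw [ENNReal.ofReal_mul (by positivity), ofReal_sqrt_natCast_mul_mul_pow]
        ring
end
end

section
/- Let G be a (discrete) group satisfying the Følner condition: for every ε > 0 and every finite K ⊆ G there exists a finite nonempty N ⊆ G with |xN △ N| < ε |N| for all x ∈ K. Let 1 < p < ∞ and p′ = p/(p−1). Then for every finitely supported symmetric probability measure μ on G (μ ≥ 0, Σ_x μ(x) = 1, μ(x⁻¹) = μ(x)), the supremum over finite nonempty sets N, M ⊆ G of ⟨μ ∗ χ_N, χ_M⟩ / (|N|^{1/p} |M|^{1/p′}) equals 1. -/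
open scoped symmDiff

noncomputable section

/-!
The pairing `⟨μ ∗ χ_N, χ_M⟩` is the `μ`-average over `x` of `|xN ∩ M|`, which is at most
`min |N| |M| ≤ |N|^{1/p} |M|^{1/p'}`; so the supremum is at most `1`. Conversely, for a Følner set
`N` that is `ε`-invariant under the (finite) support of `μ`, taking `M = N` gives
`|xN ∩ N| ≥ (1 - ε) |N|` for every `x` in the support, so the ratio is at least `1 - ε`.
-/

open Finset Function

theorem min_le_rpow_mul_rpow {a b s t : ℝ} (ha : 0 ≤ a) (hb : 0 ≤ b) (hs : 0 ≤ s) (ht : 0 ≤ t)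
    (hst : s + t = 1) : min a b ≤ a ^ s * b ^ t := by
  have hmin : 0 ≤ min a b := le_min ha hb
  calc min a b = min a b ^ s * min a b ^ t := by
        rw [← Real.rpow_add' hmin (by rw [hst]; exact one_ne_zero), hst, Real.rpow_one]
    _ ≤ a ^ s * b ^ t := by
        gcongr
        exacts [min_le_left a b, min_le_right a b]

section WeightedAverage

variable {α : Type*} {μ c : α → ℝ} {m : ℝ}

theorem summable_mul_of_support_finite (hμfin : (support μ).Finite) (c : α → ℝ) :
    Summable fun x => μ x * c x :=
  summable_of_hasFiniteSupport (hμfin.subset (support_mul_subset_left _ _))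

theorem tsum_mul_le_of_le_on_support (hμ0 : ∀ x, 0 ≤ μ x) (hμfin : (support μ).Finite)
    (hμsum : ∑' x, μ x = 1) (hc : ∀ x ∈ support μ, c x ≤ m) : ∑' x, μ x * c x ≤ m := by
  calc ∑' x, μ x * c x ≤ ∑' x, μ x * m := by
        refine Summable.tsum_le_tsum (fun x => ?_) (summable_mul_of_support_finite hμfin c)
          (summable_mul_of_support_finite hμfin fun _ => m)
        by_cases hx : μ x = 0
        · simp [hx]
        · exact mul_le_mul_of_nonneg_left (hc x hx) (hμ0 x)
    _ = m := by rw [tsum_mul_right, hμsum, one_mul]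

theorem le_tsum_mul_of_le_on_support (hμ0 : ∀ x, 0 ≤ μ x) (hμfin : (support μ).Finite)
    (hμsum : ∑' x, μ x = 1) (hc : ∀ x ∈ support μ, m ≤ c x) : m ≤ ∑' x, μ x * c x := by
  have := tsum_mul_le_of_le_on_support (c := -c) (m := -m) hμ0 hμfin hμsum fun x hx =>
    neg_le_neg (hc x hx)
  simp only [Pi.neg_apply, mul_neg, tsum_neg] at this
  linarith

end WeightedAverage

section Group

variable {G : Type*} [Group G] [DecidableEq G]

theorem filter_inv_mul_mem_eq_image_inter (x : G) (N M : Finset G) :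
    {y ∈ M | x⁻¹ * y ∈ N} = N.image (x * ·) ∩ M := by
  ext y
  simp only [mem_filter, mem_inter, mem_image]
  constructor
  · rintro ⟨hyM, hyN⟩
    exact ⟨⟨x⁻¹ * y, hyN, mul_inv_cancel_left x y⟩, hyM⟩
  · rintro ⟨⟨z, hzN, rfl⟩, hM⟩
    exact ⟨hM, by rwa [inv_mul_cancel_left]⟩

theorem card_filter_inv_mul_mem_le (x : G) (N M : Finset G) :
    #{y ∈ M | x⁻¹ * y ∈ N} ≤ #N := by
  rw [filter_inv_mul_mem_eq_image_inter]
  exact (card_le_card inter_subset_left).trans card_image_le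

theorem card_le_card_filter_inv_mul_mem_add_card_symmDiff (x : G) (N : Finset G) :
    #N ≤ #{y ∈ N | x⁻¹ * y ∈ N} + #(N.image (x * ·) ∆ N) := by
  have hsplit := card_inter_add_card_sdiff (N.image (x * ·)) N
  rw [card_image_of_injective N (mul_right_injective x)] at hsplit
  have hsdiff : N.image (x * ·) \ N ⊆ N.image (x * ·) ∆ N := fun y hy =>
    mem_symmDiff.mpr (Or.inl (mem_sdiff.mp hy))
  rw [filter_inv_mul_mem_eq_image_inter]
  have := card_le_card hsdiff
  omega

/-- `convIndicatorPairing μ N M = ⟨μ ∗ χ_N, χ_M⟩`. -/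
def convIndicatorPairing (μ : G → ℝ) (N M : Finset G) : ℝ :=
  ∑ y ∈ M, ∑' x : G, μ x * (if x⁻¹ * y ∈ N then (1 : ℝ) else 0)

variable {μ : G → ℝ}

theorem convIndicatorPairing_eq_tsum_card (hμfin : (support μ).Finite) (N M : Finset G) :
    convIndicatorPairing μ N M = ∑' x, μ x * #{y ∈ M | x⁻¹ * y ∈ N} := by
  rw [convIndicatorPairing,
    ← Summable.tsum_finsetSum fun y _ => summable_mul_of_support_finite hμfin _]
  congr 1 with x
  rw [← mul_sum, sum_boole]

variable (hμ0 : ∀ x, 0 ≤ μ x) (hμfin : (support μ).Finite) (hμsum : ∑' x, μ x = 1)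
include hμ0 hμfin hμsum

theorem convIndicatorPairing_le_rpow_mul_rpow {s t : ℝ} (hs : 0 ≤ s) (ht : 0 ≤ t)
    (hst : s + t = 1) (N M : Finset G) :
    convIndicatorPairing μ N M ≤ (#N : ℝ) ^ s * (#M : ℝ) ^ t := by
  refine (convIndicatorPairing_eq_tsum_card hμfin N M).trans_le
    ((tsum_mul_le_of_le_on_support hμ0 hμfin hμsum fun x _ => ?_).trans
      (min_le_rpow_mul_rpow (Nat.cast_nonneg _) (Nat.cast_nonneg _) hs ht hst))
  exact le_min (mod_cast card_filter_inv_mul_mem_le x N M) (mod_cast card_filter_le _ _)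

theorem le_convIndicatorPairing_self {ε : ℝ} {N : Finset G}
    (hN : ∀ x ∈ support μ, (#(N.image (x * ·) ∆ N) : ℝ) ≤ ε * #N) :
    (1 - ε) * #N ≤ convIndicatorPairing μ N N := by
  rw [convIndicatorPairing_eq_tsum_card hμfin]
  refine le_tsum_mul_of_le_on_support hμ0 hμfin hμsum fun x hx => ?_
  have hcard : (#N : ℝ) ≤ #{y ∈ N | x⁻¹ * y ∈ N} + #(N.image (x * ·) ∆ N) :=
    mod_cast card_le_card_filter_inv_mul_mem_add_card_symmDiff x N
  linarith [hN x hx]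

end Group

theorem folner_convolution_sup_eq_one_lp_general {G : Type*} [Group G] [DecidableEq G]
    (hFol : ∀ ε : ℝ, 0 < ε → ∀ K : Finset G, ∃ N : Finset G, N.Nonempty ∧
      ∀ x ∈ K, (((N.image (fun y => x * y)) ∆ N).card : ℝ) < ε * N.card)
    (p : ℝ) (hp : 1 < p) (p' : ℝ) (hp' : p' = p / (p - 1))
    (μ : G → ℝ) (hμ0 : ∀ x, 0 ≤ μ x) (hμfin : (Function.support μ).Finite)
    (hμsum : ∑' x : G, μ x = 1) :
    sSup {t : ℝ | ∃ N M : Finset G, N.Nonempty ∧ M.Nonempty ∧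
        t = (∑ y ∈ M, ∑' x : G, μ x * (if x⁻¹ * y ∈ N then (1 : ℝ) else 0)) /
            ((N.card : ℝ) ^ (1 / p) * (M.card : ℝ) ^ (1 / p'))} = 1 := by
  set S := {t : ℝ | ∃ N M : Finset G, N.Nonempty ∧ M.Nonempty ∧
      t = convIndicatorPairing μ N M / ((#N : ℝ) ^ (1 / p) * (#M : ℝ) ^ (1 / p'))}
  change sSup S = 1
  have hp0 : 0 < p := one_pos.trans hp
  have hconj : 1 / p + 1 / p' = 1 := by
    rw [hp']
    field_simp
    ring
  have hp'0 : 0 < p' := by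
    rw [hp']
    exact div_pos hp0 (sub_pos.mpr hp)
  have hub : ∀ t ∈ S, t ≤ 1 := by
    rintro _ ⟨N, M, -, -, rfl⟩
    exact div_le_one_of_le₀ (convIndicatorPairing_le_rpow_mul_rpow hμ0 hμfin hμsum
      (by positivity) (by positivity) hconj N M) (by positivity)
  refine le_antisymm (Real.sSup_le hub zero_le_one) (le_of_forall_pos_le_add fun ε hε => ?_)
  obtain ⟨N, hN, hNfol⟩ := hFol ε hε hμfin.toFinset
  have hN0 : (0 : ℝ) < #N := mod_cast hN.card_pos
  have hself := le_convIndicatorPairing_self hμ0 hμfin hμsum fun x hx =>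
    (hNfol x (hμfin.mem_toFinset.mpr hx)).le
  have hmem := le_csSup ⟨1, hub⟩ ⟨N, N, hN, hN, rfl⟩
  rw [← Real.rpow_add hN0, hconj, Real.rpow_one] at hmem
  linarith [(le_div_iff₀ hN0).mpr hself]

/-- If a group satisfies the Følner condition, then for `1 < p < ∞`, `p' = p/(p-1)`,
and every finitely supported symmetric probability measure `μ`, the supremum over
finite nonempty sets `N, M` of `⟨μ ∗ χ_N, χ_M⟩ / (|N|^{1/p} |M|^{1/p'})` equals `1`. -/
theorem folner_convolution_sup_eq_one_lp {G : Type*} [Group G] [DecidableEq G]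
    (hFol : ∀ ε : ℝ, 0 < ε → ∀ K : Finset G, ∃ N : Finset G, N.Nonempty ∧
      ∀ x ∈ K, (((N.image (fun y => x * y)) ∆ N).card : ℝ) < ε * N.card)
    (p : ℝ) (hp : 1 < p) (p' : ℝ) (hp' : p' = p / (p - 1))
    (μ : G → ℝ) (hμ0 : ∀ x, 0 ≤ μ x) (hμfin : (Function.support μ).Finite)
    (hμsum : ∑' x : G, μ x = 1) (hμsymm : ∀ x, μ x⁻¹ = μ x) :
    sSup {t : ℝ | ∃ N M : Finset G, N.Nonempty ∧ M.Nonempty ∧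
        t = (∑ y ∈ M, ∑' x : G, μ x * (if x⁻¹ * y ∈ N then (1 : ℝ) else 0)) /
            ((N.card : ℝ) ^ (1 / p) * (M.card : ℝ) ^ (1 / p'))} = 1 :=
  folner_convolution_sup_eq_one_lp_general hFol p hp p' hp' μ hμ0 hμfin hμsum
end
end

section
/- For every n ∈ ℕ and every finite subset E of the free group F, Σ_{x∈F} ((χ_n ∗ χ_E)(x))² ≤ 4 (n+1) q^n |E|. (This is the weak type (2,2) estimate ‖λ(χ_n)‖_{2→(2,∞)} ≤ 2 (n+1)^{1/2} q^{n/2} for the convolution operator with the indicator of the sphere of radius n, the special case f = χ_n of the general radial weak type (2,2) theorem.) -/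
open scoped ENNReal

noncomputable section

/-!
Write `(χ_n ∗ χ_E)(x) = Σ_{j ≤ n} U_j(x)`, where `U_j(x)` counts the `e ∈ E` with `x = y e`,
`|y| = n`, and exactly `j` letters cancelling in the product `y e`. For fixed `x` at most
`|S_i|` elements `e` contribute to `U_i(x)`, and for fixed `e` at most `|S_{n-j}|` points `x`
receive a contribution to `U_j(x)`; hence `Σ_x U_i U_j ≤ |S_i| |S_{n-j}| |E| ≤ 2 q^(n-|i-j|) |E|`,
and the geometric decay in `|i - j|` makes the double sum over `i, j ≤ n` at most
`4 (n+1) q^n |E|`. Both counts come from one fact: a word `w` of length `n` cancelling `c`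
letters against `g` ends in the inverse of the first `c` letters of `g`, so `w * g₁ ⋯ g_c` is a
word of length `n - c` determining `w`.
-/

-- The size of the sphere of radius `k` in a free group with `N` letters `a^{±1}`.
def sphereBound (N k : ℕ) : ℕ := if k = 0 then 1 else N * (N - 1) ^ (k - 1)

section Geometric

variable {q : ℕ}

theorem two_mul_geom_sum_le (hq : 3 ≤ q) (m : ℕ) : 2 * ∑ k ∈ Finset.range m, q ^ k ≤ q ^ m := by
  induction m with
  | zero => simp
  | succ m ih =>
    rw [Finset.sum_range_succ, Nat.mul_add, pow_succ]
    have := Nat.mul_le_mul_left (q ^ m) hq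
    omega

theorem two_mul_sum_range_pow_sub_le (hq : 3 ≤ q) {m n : ℕ} (hm : m ≤ n) :
    2 * ∑ k ∈ Finset.range m, q ^ (n - 1 - k) ≤ q ^ n := by
  calc 2 * ∑ k ∈ Finset.range m, q ^ (n - 1 - k)
      ≤ 2 * ∑ k ∈ Finset.range n, q ^ (n - 1 - k) :=
        Nat.mul_le_mul_left 2 (Finset.sum_le_sum_of_subset (Finset.range_mono hm))
    _ = 2 * ∑ k ∈ Finset.range n, q ^ k := by rw [Finset.sum_range_reflect (q ^ ·) n]
    _ ≤ q ^ n := two_mul_geom_sum_le hq n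

theorem sum_range_pow_sub_dist_le (hq : 3 ≤ q) {i n : ℕ} (hi : i ≤ n) :
    ∑ j ∈ Finset.range (n + 1), q ^ (n - Nat.dist i j) ≤ 2 * q ^ n := by
  have hleft : ∑ j ∈ Finset.range i, q ^ (n - Nat.dist i j)
      = ∑ k ∈ Finset.range i, q ^ (n - 1 - k) := by
    rw [← Finset.sum_range_reflect (fun k => q ^ (n - 1 - k)) i]
    refine Finset.sum_congr rfl fun j hj => ?_
    rw [Finset.mem_range] at hj
    rw [Nat.dist_eq_sub_of_le_right hj.le]
    congr 1
    omega
  have hright : ∑ k ∈ Finset.range (n - i), q ^ (n - Nat.dist i (i + 1 + k))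
      = ∑ k ∈ Finset.range (n - i), q ^ (n - 1 - k) := by
    refine Finset.sum_congr rfl fun k _ => ?_
    rw [Nat.dist_eq_sub_of_le (by omega)]
    congr 1
    omega
  rw [show n + 1 = i + 1 + (n - i) by omega, Finset.sum_range_add, Finset.sum_range_succ,
    hleft, hright, Nat.dist_self, Nat.sub_zero]
  have := two_mul_sum_range_pow_sub_le hq hi
  have := two_mul_sum_range_pow_sub_le hq (Nat.sub_le n i)
  omega

theorem mul_sphereBound_le (q k : ℕ) : q * sphereBound (q + 1) k ≤ (q + 1) * q ^ k := by
  rcases k with _ | k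
  · simp [sphereBound]
  · rw [sphereBound, if_neg k.succ_ne_zero, add_tsub_cancel_right, add_tsub_cancel_right, pow_succ]
    exact le_of_eq (by ring)

theorem sphereBound_mul_sphereBound_le (hq : 3 ≤ q) {i j n : ℕ} (hij : i ≤ j) (hjn : j ≤ n) :
    sphereBound (q + 1) i * sphereBound (q + 1) (n - j) ≤ 2 * q ^ (n - (j - i)) := by
  have hq2 : 0 < q ^ 2 := by positivity
  refine Nat.le_of_mul_le_mul_left ?_ hq2
  calc q ^ 2 * (sphereBound (q + 1) i * sphereBound (q + 1) (n - j))
      = (q * sphereBound (q + 1) i) * (q * sphereBound (q + 1) (n - j)) := by ring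
    _ ≤ ((q + 1) * q ^ i) * ((q + 1) * q ^ (n - j)) :=
        Nat.mul_le_mul (mul_sphereBound_le q i) (mul_sphereBound_le q (n - j))
    _ = (q + 1) ^ 2 * q ^ (n - (j - i)) := by
        rw [show n - (j - i) = i + (n - j) by omega, pow_add]
        ring
    _ ≤ 2 * q ^ 2 * q ^ (n - (j - i)) := Nat.mul_le_mul_right _ (by nlinarith)
    _ = q ^ 2 * (2 * q ^ (n - (j - i))) := by ring

end Geometric

theorem ENNReal.tsum_indicator_one {β : Type*} (s : Set β) :
    ∑' x, s.indicator (1 : β → ℝ≥0∞) x = s.encard := by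
  rw [← tsum_subtype]
  exact ENNReal.tsum_set_one s

namespace FreeGroup

variable {α : Type*} [DecidableEq α]

theorem toWord_mk_of_isReduced {L : List (α × Bool)} (h : IsReduced L) : (mk L).toWord = L := by
  rw [toWord_mk, h.reduce_eq]

theorem wlen_mk_of_isReduced {L : List (α × Bool)} (h : IsReduced L) :
    wlen (mk L) = L.length := by
  rw [wlen, toWord_mk_of_isReduced h]

theorem wlen_one : wlen (1 : FreeGroup α) = 0 := norm_one

theorem wlen_inv (x : FreeGroup α) : wlen x⁻¹ = wlen x := norm_inv_eq

theorem wlen_mul_le (x y : FreeGroup α) : wlen (x * y) ≤ wlen x + wlen y := norm_mul_le x y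

theorem exists_wlen_mul_add_two_mul (x y : FreeGroup α) :
    ∃ k, wlen (x * y) + 2 * k = wlen x + wlen y := by
  obtain ⟨k, hk⟩ := Red.length (reduce.red (L := x.toWord ++ y.toWord))
  refine ⟨k, ?_⟩
  rw [wlen, wlen, wlen, toWord_mul, ← hk, List.length_append]

theorem isReduced_of_toWord_eq_append {x : FreeGroup α} {W : List (α × Bool)} {m : α × Bool}
    (h : x.toWord = W ++ [m]) : IsReduced (W ++ [m]) :=
  h ▸ isReduced_toWord

theorem mul_mk_of_toWord_eq_append {x : FreeGroup α} {W : List (α × Bool)} {a : α} {b : Bool}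
    (h : x.toWord = W ++ [(a, b)]) : x * mk [(a, !b)] = mk W := by
  rw [← mk_toWord (x := x), h, mul_mk, List.append_assoc, List.singleton_append]
  have hstep := (Red.Step.not (L₁ := W) (L₂ := []) (x := a) (b := b)).to_red
  exact Red.exact.2 ⟨W, by simpa using hstep, Red.refl⟩

theorem exists_toWord_eq_append {x : FreeGroup α} (h : x ≠ 1) : ∃ W m, x.toWord = W ++ [m] := by
  obtain ⟨W, m, hm⟩ := (List.eq_nil_or_concat x.toWord).resolve_left (toWord_eq_nil_iff.not.2 h)
  exact ⟨W, m, by simpa using hm⟩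

theorem wlen_mul_eq_add_of_no_cancel {x y : FreeGroup α} {W T : List (α × Bool)} {m ℓ : α × Bool}
    (hx : x.toWord = W ++ [m]) (hy : y.toWord = ℓ :: T) (hm : m.1 = ℓ.1 → m.2 = ℓ.2) :
    wlen (x * y) = wlen x + wlen y := by
  have hred : IsReduced (W ++ [m] ++ ℓ :: T) := by
    refine List.isChain_append.2 ⟨hx ▸ isReduced_toWord, hy ▸ isReduced_toWord, ?_⟩
    simp only [List.getLast?_concat, List.head?_cons, Option.mem_def, Option.some.injEq]
    rintro _ rfl _ rfl
    exact hm
  rw [wlen, wlen, wlen, toWord_mul, hx, hy, hred.reduce_eq, List.length_append]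

theorem exists_toWord_eq_append_of_wlen_mul_lt {w g : FreeGroup α} {a : α} {b : Bool}
    {T : List (α × Bool)} (hg : g.toWord = (a, b) :: T) (hlt : wlen (w * g) < wlen w + wlen g) :
    ∃ W, w.toWord = W ++ [(a, !b)] := by
  have hw : w ≠ 1 := by
    rintro rfl
    rw [one_mul, wlen_one, zero_add] at hlt
    exact lt_irrefl _ hlt
  obtain ⟨W, ⟨a', b'⟩, hW⟩ := exists_toWord_eq_append hw
  refine ⟨W, ?_⟩
  by_contra hne
  refine hlt.ne (wlen_mul_eq_add_of_no_cancel hW hg fun ha => ?_)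
  subst ha
  cases b <;> cases b' <;> simp_all

-- `x = y * e` with `|y| = n`, where `j` letters cancel in `y * e`.
def sphereSlice (n j : ℕ) (e : FreeGroup α) : Set (FreeGroup α) :=
  {x | wlen (x * e⁻¹) = n ∧ wlen x + 2 * j = wlen e + n}

theorem sphInd_mul_inv_eq_sum (n : ℕ) (x e : FreeGroup α) :
    sphInd n (x * e⁻¹) = ∑ j ∈ Finset.range (n + 1), (sphereSlice n j e).indicator 1 x := by
  by_cases h : wlen (x * e⁻¹) = n
  · obtain ⟨k, hk⟩ := exists_wlen_mul_add_two_mul (x * e⁻¹) e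
    have htri := wlen_mul_le (x * e⁻¹)⁻¹ x
    rw [inv_mul_cancel_right] at hk
    rw [wlen_inv, mul_inv_rev, inv_inv, inv_mul_cancel_right] at htri
    rw [h] at hk htri
    have hterm : ∀ j, (sphereSlice n j e).indicator 1 x = if j = k then (1 : ℝ≥0∞) else 0 := by
      intro j
      have hmem : x ∈ sphereSlice n j e ↔ j = k := by
        simp only [sphereSlice, Set.mem_ofPred_eq, h, true_and]
        omega
      by_cases hj : j = k
      · rw [if_pos hj, Set.indicator_of_mem (hmem.2 hj), Pi.one_apply]
      · rw [if_neg hj, Set.indicator_of_notMem (mt hmem.1 hj)]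
    rw [Finset.sum_congr rfl fun j _ => hterm j, Finset.sum_ite_eq',
      if_pos (Finset.mem_range.2 (by omega)), sphInd, if_pos h]
  · simp [sphInd, h, sphereSlice]

theorem conv_sphInd_finInd (n : ℕ) (E : Finset (FreeGroup α)) (x : FreeGroup α) :
    conv (sphInd n) (finInd E) x = ∑ e ∈ E, sphInd n (x * e⁻¹) := by
  rw [conv, ← (Equiv.divLeft x).tsum_eq, tsum_eq_sum (s := E) fun e he => by simp [finInd, he]]
  refine Finset.sum_congr rfl fun e he => ?_
  simp [finInd, he, div_eq_mul_inv]

def sliceCount (n j : ℕ) (E : Finset (FreeGroup α)) (x : FreeGroup α) : ℝ≥0∞ :=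
  ∑ e ∈ E, (sphereSlice n j e).indicator 1 x

theorem conv_eq_sum_sliceCount (n : ℕ) (E : Finset (FreeGroup α)) (x : FreeGroup α) :
    conv (sphInd n) (finInd E) x = ∑ j ∈ Finset.range (n + 1), sliceCount n j E x := by
  simp only [conv_sphInd_finInd, sphInd_mul_inv_eq_sum, sliceCount]
  exact Finset.sum_comm

section Counting

variable [Fintype α]

-- Reduced words of length `k + 1` whose last letter is `m`.
def endingIn (k : ℕ) (m : α × Bool) : Set (FreeGroup α) :=
  {x | ∃ W, x.toWord = W ++ [m] ∧ W.length = k}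

theorem encard_endingIn_le (k : ℕ) (m : α × Bool) :
    (endingIn k m).encard ≤ ((Fintype.card (α × Bool) - 1) ^ k : ℕ) := by
  induction k generalizing m with
  | zero =>
    refine (Set.encard_le_encard (t := {mk [m]}) ?_).trans (by simp)
    rintro x ⟨W, hx, hW⟩
    rw [List.length_eq_zero_iff.1 hW, List.nil_append] at hx
    rw [Set.mem_singleton_iff, ← hx, mk_toWord]
  | succ k ih =>
    obtain ⟨a, b⟩ := m
    have hmaps : Set.MapsTo (· * mk [(a, !b)]) (endingIn (k + 1) (a, b))
        (⋃ m' ∈ Finset.univ.erase (a, !b), endingIn k m') := by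
      rintro x ⟨W, hx, hW⟩
      obtain ⟨W', m', rfl⟩ : ∃ W' m', W = W' ++ [m'] := by
        rcases List.eq_nil_or_concat W with rfl | ⟨W', m', rfl⟩
        · simp at hW
        · exact ⟨W', m', by simp⟩
      have hred := isReduced_of_toWord_eq_append hx
      have hm' : m' ≠ (a, !b) := by
        rintro rfl
        have := List.isChain_append.1 hred
        simp at this
      simp only [Set.mem_iUnion, Finset.mem_erase, Finset.mem_univ, and_true]
      refine ⟨m', hm', W', ?_, by simpa using hW⟩
      rw [mul_mk_of_toWord_eq_append hx,
        toWord_mk_of_isReduced (hred.infix ⟨[], [(a, b)], by simp⟩)]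
    calc (endingIn (k + 1) (a, b)).encard
        ≤ (⋃ m' ∈ Finset.univ.erase (a, !b), endingIn k m').encard :=
          Set.encard_le_encard_of_injOn hmaps (mul_left_injective _).injOn
      _ ≤ ∑ m' ∈ Finset.univ.erase (a, !b), (endingIn k m').encard :=
          Finset.set_encard_biUnion_le _ _
      _ ≤ ∑ m' ∈ Finset.univ.erase (a, !b), (((Fintype.card (α × Bool) - 1) ^ k : ℕ) : ℕ∞) :=
          Finset.sum_le_sum fun m' _ => ih m'
      _ = ((Fintype.card (α × Bool) - 1) ^ (k + 1) : ℕ) := by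
          rw [Finset.sum_const, Finset.card_erase_of_mem (Finset.mem_univ _), Finset.card_univ,
            nsmul_eq_mul, pow_succ', Nat.cast_mul]

theorem encard_sphere_le (k : ℕ) :
    {x : FreeGroup α | wlen x = k}.encard ≤ sphereBound (Fintype.card (α × Bool)) k := by
  cases k with
  | zero =>
    have : {x : FreeGroup α | wlen x = 0} = {1} := Set.ext fun x => norm_eq_zero
    simp [this, sphereBound]
  | succ k =>
    have hsub : {x : FreeGroup α | wlen x = k + 1} ⊆ ⋃ m, endingIn k m := by
      intro x hx
      have hx1 : x ≠ 1 := by rintro rfl; simp [wlen_one] at hx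
      obtain ⟨W, m, hW⟩ := exists_toWord_eq_append hx1
      refine Set.mem_iUnion.2 ⟨m, W, hW, ?_⟩
      have := congrArg List.length hW
      simp only [wlen, Set.mem_ofPred_eq] at hx
      simp_all
    calc {x : FreeGroup α | wlen x = k + 1}.encard
        ≤ ∑ m, (endingIn k m).encard :=
          (Set.encard_le_encard hsub).trans (Set.encard_iUnion_le_of_fintype _)
      _ ≤ ∑ _m : α × Bool, (((Fintype.card (α × Bool) - 1) ^ k : ℕ) : ℕ∞) :=
          Finset.sum_le_sum fun m _ => encard_endingIn_le k m
      _ = sphereBound (Fintype.card (α × Bool)) (k + 1) := by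
          simp [sphereBound]

def cancelSet (n c : ℕ) (g : FreeGroup α) : Set (FreeGroup α) :=
  {w | wlen w = n ∧ wlen (w * g) + 2 * c = n + wlen g}

theorem encard_cancelSet_le {n c : ℕ} (hc : c ≤ n) (g : FreeGroup α) :
    (cancelSet n c g).encard ≤ sphereBound (Fintype.card (α × Bool)) (n - c) := by
  induction c generalizing n g with
  | zero => exact (Set.encard_le_encard fun w hw => hw.1).trans (encard_sphere_le n)
  | succ c ih =>
    rcases hg : g.toWord with _ | ⟨⟨a, b⟩, T⟩
    · have hempty : cancelSet n (c + 1) g = ∅ := by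
        refine Set.eq_empty_of_forall_notMem fun w ⟨hw, hwg⟩ => ?_
        rw [toWord_eq_nil_iff.1 hg, mul_one, hw, wlen_one] at hwg
        omega
      simp [hempty]
    have hT : IsReduced T := (hg ▸ isReduced_toWord (x := g)).tail
    have hmk : mk [(a, b)] * mk T = g := by
      rw [mul_mk, List.singleton_append, ← hg, mk_toWord]
    have hlen : wlen (mk T) + 1 = wlen g := by
      rw [wlen_mk_of_isReduced hT, wlen, hg, List.length_cons]
    have hmaps : Set.MapsTo (· * mk [(a, b)]) (cancelSet n (c + 1) g)
        (cancelSet (n - 1) c (mk T)) := by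
      rintro w ⟨hw, hwg⟩
      obtain ⟨W, hW⟩ := exists_toWord_eq_append_of_wlen_mul_lt (w := w) hg (by omega)
      have hWlen : W.length + 1 = n := by
        rw [← hw, wlen, hW, List.length_append, List.length_singleton]
      have hwa : w * mk [(a, b)] = mk W := by
        simpa using mul_mk_of_toWord_eq_append hW
      have hWred : IsReduced W := (isReduced_of_toWord_eq_append hW).infix ⟨[], _, rfl⟩
      refine ⟨?_, ?_⟩ <;> dsimp only
      · rw [hwa, wlen_mk_of_isReduced hWred]
        omega
      · rw [mul_assoc, hmk]
        omega
    calc (cancelSet n (c + 1) g).encard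
        ≤ (cancelSet (n - 1) c (mk T)).encard :=
          Set.encard_le_encard_of_injOn hmaps (mul_left_injective _).injOn
      _ ≤ sphereBound (Fintype.card (α × Bool)) (n - (c + 1)) := by
          simpa [Nat.sub_sub, add_comm] using ih (n := n - 1) (by omega) (mk T)

theorem encard_sphereSlice_le {n j : ℕ} (hj : j ≤ n) (e : FreeGroup α) :
    (sphereSlice n j e).encard ≤ sphereBound (Fintype.card (α × Bool)) (n - j) := by
  refine (Set.encard_le_encard_of_injOn (f := (· * e⁻¹)) ?_ (mul_left_injective _).injOn).trans
    (encard_cancelSet_le hj e)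
  rintro x ⟨hx, hxe⟩
  exact ⟨hx, by simpa using by omega⟩

theorem encard_setOf_mem_sphereSlice_le {n i : ℕ} (hi : i ≤ n) (x : FreeGroup α) :
    {e | x ∈ sphereSlice n i e}.encard ≤ sphereBound (Fintype.card (α × Bool)) i := by
  refine (Set.encard_le_encard_of_injOn (f := (· * x⁻¹)) ?_ (mul_left_injective _).injOn).trans
    ((encard_cancelSet_le (Nat.sub_le n i) x).trans_eq (by rw [Nat.sub_sub_self hi]))
  rintro e ⟨hx, hxe⟩
  refine ⟨by rwa [← wlen_inv, mul_inv_rev, inv_inv], ?_⟩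
  simp only [inv_mul_cancel_right]
  omega

theorem sliceCount_le {n i : ℕ} (hi : i ≤ n) (E : Finset (FreeGroup α)) (x : FreeGroup α) :
    sliceCount n i E x ≤ sphereBound (Fintype.card (α × Bool)) i := by
  calc sliceCount n i E x = ∑ e ∈ E, {e | x ∈ sphereSlice n i e}.indicator 1 e := rfl
    _ ≤ ∑' e, {e | x ∈ sphereSlice n i e}.indicator 1 e := ENNReal.sum_le_tsum E
    _ ≤ sphereBound (Fintype.card (α × Bool)) i := by
        rw [ENNReal.tsum_indicator_one, ← ENat.toENNReal_coe, ENat.toENNReal_le]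
        exact encard_setOf_mem_sphereSlice_le hi x

theorem tsum_sliceCount_le {n j : ℕ} (hj : j ≤ n) (E : Finset (FreeGroup α)) :
    ∑' x, sliceCount n j E x ≤ E.card * sphereBound (Fintype.card (α × Bool)) (n - j) := by
  calc ∑' x, sliceCount n j E x = ∑ e ∈ E, ((sphereSlice n j e).encard : ℝ≥0∞) := by
        simp only [sliceCount, ← ENNReal.tsum_indicator_one]
        exact Summable.tsum_finsetSum fun _ _ => ENNReal.summable
    _ ≤ ∑ _e ∈ E, (sphereBound (Fintype.card (α × Bool)) (n - j) : ℝ≥0∞) := by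
        refine Finset.sum_le_sum fun e _ => ?_
        rw [← ENat.toENNReal_coe, ENat.toENNReal_le]
        exact encard_sphereSlice_le hj e
    _ = E.card * sphereBound (Fintype.card (α × Bool)) (n - j) := by
        rw [Finset.sum_const, nsmul_eq_mul]

theorem tsum_sliceCount_mul_le_sphereBound {n i j : ℕ} (hi : i ≤ n) (hj : j ≤ n)
    (E : Finset (FreeGroup α)) :
    ∑' x, sliceCount n i E x * sliceCount n j E x ≤
      sphereBound (Fintype.card (α × Bool)) i *
        (E.card * sphereBound (Fintype.card (α × Bool)) (n - j)) := by
  calc ∑' x, sliceCount n i E x * sliceCount n j E x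
      ≤ ∑' x, sphereBound (Fintype.card (α × Bool)) i * sliceCount n j E x :=
        ENNReal.tsum_le_tsum fun x => mul_le_mul_left (sliceCount_le hi E x) _
    _ = sphereBound (Fintype.card (α × Bool)) i * ∑' x, sliceCount n j E x := ENNReal.tsum_mul_left
    _ ≤ _ := mul_le_mul_right (tsum_sliceCount_le hj E) _

theorem tsum_sliceCount_mul_le {q n i j : ℕ} (hN : Fintype.card (α × Bool) = q + 1) (hq : 3 ≤ q)
    (hi : i ≤ n) (hj : j ≤ n) (E : Finset (FreeGroup α)) :
    ∑' x, sliceCount n i E x * sliceCount n j E x ≤ (2 * q ^ (n - Nat.dist i j) : ℕ) * E.card := by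
  wlog hij : i ≤ j generalizing i j
  · simpa only [mul_comm (sliceCount n i E _), Nat.dist_comm] using this hj hi (le_of_not_ge hij)
  calc ∑' x, sliceCount n i E x * sliceCount n j E x
      ≤ sphereBound (q + 1) i * (E.card * sphereBound (q + 1) (n - j)) := by
        simpa only [hN] using tsum_sliceCount_mul_le_sphereBound hi hj E
    _ = (sphereBound (q + 1) i * sphereBound (q + 1) (n - j) : ℕ) * E.card := by
        push_cast
        ring
    _ ≤ (2 * q ^ (n - Nat.dist i j) : ℕ) * E.card := by
        rw [Nat.dist_eq_sub_of_le hij]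
        exact mul_le_mul_left (Nat.cast_le.2 (sphereBound_mul_sphereBound_le hq hij hj)) _

end Counting

end FreeGroup

/-- Weak type `(2,2)` estimate for the convolution with a sphere indicator: for every
`n` and every finite `E`, `Σ_x ((χ_n ∗ χ_E)(x))² ≤ 4 (n+1) q^n |E|`. -/
theorem sphere_weak_type_two_two
    (r : ℕ) (hr : 2 ≤ r) (q : ℕ) (hq : q = 2 * r - 1)
    (n : ℕ) (E : Finset (FreeGroup (Fin r))) :
    ∑' x : FreeGroup (Fin r), (conv (sphInd n) (finInd E) x) ^ 2
      ≤ 4 * (n + 1 : ℝ≥0∞) * (q : ℝ≥0∞) ^ n * (E.card : ℝ≥0∞) := by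
  have hN : Fintype.card (Fin r × Bool) = q + 1 := by simp; omega
  have hq3 : 3 ≤ q := by omega
  calc ∑' x, (conv (sphInd n) (finInd E) x) ^ 2
      = ∑ i ∈ Finset.range (n + 1), ∑ j ∈ Finset.range (n + 1),
          ∑' x, FreeGroup.sliceCount n i E x * FreeGroup.sliceCount n j E x := by
        simp_rw [FreeGroup.conv_eq_sum_sliceCount, sq, Finset.sum_mul_sum]
        rw [Summable.tsum_finsetSum fun _ _ => ENNReal.summable]
        exact Finset.sum_congr rfl fun i _ => Summable.tsum_finsetSum fun _ _ => ENNReal.summable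
    _ ≤ ∑ i ∈ Finset.range (n + 1), ∑ j ∈ Finset.range (n + 1),
          ((2 * q ^ (n - Nat.dist i j) : ℕ) : ℝ≥0∞) * E.card := by
        gcongr with i hi j hj
        exact FreeGroup.tsum_sliceCount_mul_le hN hq3 (Finset.mem_range_succ_iff.1 hi)
          (Finset.mem_range_succ_iff.1 hj) E
    _ ≤ ∑ _i ∈ Finset.range (n + 1), ((4 * q ^ n : ℕ) : ℝ≥0∞) * E.card := by
        gcongr with i hi
        rw [← Finset.sum_mul, ← Nat.cast_sum, ← Finset.mul_sum]
        refine mul_le_mul_left (Nat.cast_le.2 ?_) _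
        have := sum_range_pow_sub_dist_le hq3 (Finset.mem_range_succ_iff.1 hi)
        omega
    _ = 4 * (n + 1 : ℝ≥0∞) * (q : ℝ≥0∞) ^ n * (E.card : ℝ≥0∞) := by
        simp only [Finset.sum_const, Finset.card_range, nsmul_eq_mul]
        push_cast
        ring
end
end
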